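/- Let n, t be natural numbers, λ > 0 and B ≥ 0 real numbers, and set κ = 1/(s(B)·(1 − s(B))). Let v_1, …, v_t ∈ ℝ^n with ‖v_τ‖ ≤ 1 for all τ, let V = λκ·I_n + Σ_{τ=1}^t v_τ v_τᵀ (which is positive definite, hence invertible), and define g : ℝ^n → ℝ^n by g(θ) = λ·θ + Σ_{τ=1}^t s(⟨θ, v_τ⟩)·v_τ. Then for all θ₁, θ₂ ∈ ℝ^n with ‖θ₁‖ ≤ B and ‖θ₂‖ ≤ B, (θ₁ − θ₂)ᵀ V (θ₁ − θ₂) ≤ κ² · (g(θ₁) − g(θ₂))ᵀ V⁻¹ (g(θ₁) − g(θ₂)). -/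

import Mathlib

/-!
Put x = θ₁ - θ₂, w = g θ₁ - g θ₂ and μ = 1/κ = s(B)(1 - s(B)). On [-B, B] the derivative s(1 - s)
of the sigmoid is at least μ, and |⟨θᵢ, v_τ⟩| ≤ B, so each summand of ⟨w, x⟩ dominates the
corresponding summand of μ·xᵀVx; that is, μ·xᵀVx ≤ ⟨w, x⟩. Cauchy–Schwarz for the inner product
induced by V⁻¹, applied to w and Vx, gives ⟨w, x⟩² ≤ (wᵀV⁻¹w)(xᵀVx), hence μ²·xᵀVx ≤ wᵀV⁻¹w.
-/

open Matrix

noncomputable def sigmoid (z : ℝ) : ℝ := 1 / (1 + Real.exp (-z))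

lemma sigmoid_eq_real_sigmoid : sigmoid = Real.sigmoid :=
  funext fun _ => one_div _

lemma sigmoid_mul_one_sub_le_of_abs_le {B c : ℝ} (hc : |c| ≤ B) :
    Real.sigmoid B * (1 - Real.sigmoid B) ≤ Real.sigmoid c * (1 - Real.sigmoid c) := by
  have hcB : Real.sigmoid c ≤ Real.sigmoid B := Real.sigmoid_le (le_of_abs_le hc)
  have hBc : 1 - Real.sigmoid B ≤ Real.sigmoid c := by
    rw [← Real.sigmoid_neg]; exact Real.sigmoid_le (neg_le_of_abs_le hc)
  nlinarith

lemma monotoneOn_sigmoid_sub_mul (B : ℝ) :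
    MonotoneOn (fun z => Real.sigmoid z - Real.sigmoid B * (1 - Real.sigmoid B) * z)
      (Set.Icc (-B) B) := by
  refine monotoneOn_of_hasDerivWithinAt_nonneg (convex_Icc _ _) (by fun_prop)
    (fun z _ => ((Real.hasDerivAt_sigmoid z).sub ((hasDerivAt_id z).const_mul _)).hasDerivWithinAt)
    fun z hz => ?_
  rw [interior_Icc] at hz
  have := sigmoid_mul_one_sub_le_of_abs_le (abs_le.mpr ⟨hz.1.le, hz.2.le⟩)
  simp only [mul_one]
  linarith

lemma mul_sq_le_sigmoid_sub_mul_sub {B a b : ℝ} (ha : |a| ≤ B) (hb : |b| ≤ B) :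
    Real.sigmoid B * (1 - Real.sigmoid B) * (a - b) ^ 2 ≤
      (Real.sigmoid a - Real.sigmoid b) * (a - b) := by
  have hmono := monotoneOn_sigmoid_sub_mul B
  have hIcc : ∀ {c : ℝ}, |c| ≤ B → c ∈ Set.Icc (-B) B := fun hc => abs_le.mp hc
  rcases le_total a b with hab | hba
  · have := hmono (hIcc ha) (hIcc hb) hab
    nlinarith
  · have := hmono (hIcc hb) (hIcc ha) hba
    nlinarith

section

variable {ι T : Type*} [Fintype ι] [Fintype T]

lemma abs_dotProduct_le_sqrt_mul_sqrt (x y : ι → ℝ) :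
    |x ⬝ᵥ y| ≤ √(∑ i, x i ^ 2) * √(∑ i, y i ^ 2) := by
  rw [← Real.sqrt_mul (Finset.sum_nonneg fun i _ => sq_nonneg (x i))]
  exact Real.abs_le_sqrt (Finset.sum_mul_sq_le_sq_mul_sq _ x y)

lemma Matrix.PosSemidef.dotProduct_mulVec_sq_le {A : Matrix ι ι ℝ} (hA : A.PosSemidef)
    (x y : ι → ℝ) : (x ⬝ᵥ (A *ᵥ y)) ^ 2 ≤ (x ⬝ᵥ (A *ᵥ x)) * (y ⬝ᵥ (A *ᵥ y)) := by
  let := A.toSeminormedAddCommGroup hA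
  let := A.toInnerProductSpace hA
  have := real_inner_mul_inner_self_le x y
  -- the inner product induced by `A` is `⟪x, y⟫ = (A *ᵥ y) ⬝ᵥ x`
  change ((A *ᵥ y) ⬝ᵥ x) * ((A *ᵥ y) ⬝ᵥ x) ≤ ((A *ᵥ x) ⬝ᵥ x) * ((A *ᵥ y) ⬝ᵥ y) at this
  simpa only [sq, dotProduct_comm (A *ᵥ _)] using this

lemma Matrix.PosDef.dotProduct_sq_le [DecidableEq ι] {V : Matrix ι ι ℝ} (hV : V.PosDef)
    (w x : ι → ℝ) : (w ⬝ᵥ x) ^ 2 ≤ (w ⬝ᵥ (V⁻¹ *ᵥ w)) * (x ⬝ᵥ (V *ᵥ x)) := by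
  have h := hV.inv.posSemidef.dotProduct_mulVec_sq_le w (V *ᵥ x)
  rwa [mulVec_mulVec, nonsing_inv_mul _ ((isUnit_iff_isUnit_det V).mp hV.isUnit), one_mulVec,
    dotProduct_comm (V *ᵥ x) x] at h

lemma Matrix.PosDef.sq_mul_dotProduct_mulVec_le [DecidableEq ι] {V : Matrix ι ι ℝ}
    (hV : V.PosDef) {μ : ℝ} (hμ : 0 ≤ μ) {w x : ι → ℝ}
    (hwx : μ * (x ⬝ᵥ (V *ᵥ x)) ≤ w ⬝ᵥ x) :
    μ ^ 2 * (x ⬝ᵥ (V *ᵥ x)) ≤ w ⬝ᵥ (V⁻¹ *ᵥ w) := by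
  have hQ : 0 ≤ x ⬝ᵥ (V *ᵥ x) := by simpa using hV.posSemidef.dotProduct_mulVec_nonneg x
  have hR : 0 ≤ w ⬝ᵥ (V⁻¹ *ᵥ w) := by simpa using hV.inv.posSemidef.dotProduct_mulVec_nonneg w
  have hsq : (μ * (x ⬝ᵥ (V *ᵥ x))) ^ 2 ≤ (w ⬝ᵥ (V⁻¹ *ᵥ w)) * (x ⬝ᵥ (V *ᵥ x)) :=
    (pow_le_pow_left₀ (by positivity) hwx 2).trans (hV.dotProduct_sq_le w x)
  rcases hQ.eq_or_lt with hQ0 | hQpos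
  · rw [← hQ0, mul_zero]; exact hR
  · nlinarith

def regularizedGram [DecidableEq ι] (c : ℝ) (v : T → ι → ℝ) : Matrix ι ι ℝ :=
  c • 1 + ∑ τ, vecMulVec (v τ) (v τ)

def regularizedGlmGradient (lam : ℝ) (f : ℝ → ℝ) (v : T → ι → ℝ) (θ : ι → ℝ) : ι → ℝ :=
  lam • θ + ∑ τ, f (θ ⬝ᵥ v τ) • v τ

lemma regularizedGram_posDef [DecidableEq ι] {c : ℝ} (hc : 0 < c) (v : T → ι → ℝ) :
    (regularizedGram c v).PosDef :=
  (PosDef.one.smul hc).add_posSemidef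
    (posSemidef_sum _ fun τ _ => by simpa using posSemidef_vecMulVec_self_star (v τ))

lemma dotProduct_regularizedGram_mulVec [DecidableEq ι] (c : ℝ) (v : T → ι → ℝ) (x : ι → ℝ) :
    x ⬝ᵥ (regularizedGram c v *ᵥ x) = c * (x ⬝ᵥ x) + ∑ τ, (v τ ⬝ᵥ x) ^ 2 := by
  simp only [regularizedGram, add_mulVec, smul_mulVec, one_mulVec, sum_mulVec, vecMulVec_mulVec,
    op_smul_eq_smul, dotProduct_add, dotProduct_smul, dotProduct_sum, smul_eq_mul]
  simp only [dotProduct_comm x, sq]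

lemma regularizedGlmGradient_sub_dotProduct (lam : ℝ) (f : ℝ → ℝ) (v : T → ι → ℝ)
    (θ₁ θ₂ : ι → ℝ) :
    (regularizedGlmGradient lam f v θ₁ - regularizedGlmGradient lam f v θ₂) ⬝ᵥ (θ₁ - θ₂) =
      lam * ((θ₁ - θ₂) ⬝ᵥ (θ₁ - θ₂)) +
        ∑ τ, (f (θ₁ ⬝ᵥ v τ) - f (θ₂ ⬝ᵥ v τ)) * (θ₁ ⬝ᵥ v τ - θ₂ ⬝ᵥ v τ) := by
  rw [regularizedGlmGradient, regularizedGlmGradient, add_sub_add_comm, ← smul_sub,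
    ← Finset.sum_sub_distrib, add_dotProduct, smul_dotProduct, smul_eq_mul, sum_dotProduct]
  congr 1
  refine Finset.sum_congr rfl fun τ _ => ?_
  rw [← sub_smul, smul_dotProduct, smul_eq_mul, dotProduct_sub, dotProduct_comm (v τ) θ₁,
    dotProduct_comm (v τ) θ₂]

lemma mul_dotProduct_regularizedGram_mulVec_le [DecidableEq ι] {lam μ c : ℝ} (hc : μ * c = lam)
    {f : ℝ → ℝ} (v : T → ι → ℝ) {θ₁ θ₂ : ι → ℝ}
    (hf : ∀ τ, μ * (θ₁ ⬝ᵥ v τ - θ₂ ⬝ᵥ v τ) ^ 2 ≤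
      (f (θ₁ ⬝ᵥ v τ) - f (θ₂ ⬝ᵥ v τ)) * (θ₁ ⬝ᵥ v τ - θ₂ ⬝ᵥ v τ)) :
    μ * ((θ₁ - θ₂) ⬝ᵥ (regularizedGram c v *ᵥ (θ₁ - θ₂))) ≤
      (regularizedGlmGradient lam f v θ₁ - regularizedGlmGradient lam f v θ₂) ⬝ᵥ (θ₁ - θ₂) := by
  rw [dotProduct_regularizedGram_mulVec, regularizedGlmGradient_sub_dotProduct, mul_add,
    ← mul_assoc, hc, Finset.mul_sum]
  refine add_le_add le_rfl (Finset.sum_le_sum fun τ _ => ?_)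
  rw [dotProduct_comm, sub_dotProduct]
  exact hf τ

end

theorem quadratic_form_bound_via_gradient_general
    (n t : ℕ) (lam B κ : ℝ) (hlam : 0 < lam)
    (hκ : κ = 1 / (sigmoid B * (1 - sigmoid B)))
    (v : Fin t → (Fin n → ℝ))
    (hv : ∀ τ, Real.sqrt (∑ i, v τ i ^ 2) ≤ 1)
    (V : Matrix (Fin n) (Fin n) ℝ)
    (hV : V = (lam * κ) • (1 : Matrix (Fin n) (Fin n) ℝ) +
        ∑ τ, vecMulVec (v τ) (v τ))
    (g : (Fin n → ℝ) → (Fin n → ℝ))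
    (hg : ∀ θ, g θ = lam • θ + ∑ τ, sigmoid (θ ⬝ᵥ v τ) • v τ) :
    V.PosDef ∧
      ∀ θ₁ θ₂ : Fin n → ℝ,
        Real.sqrt (∑ i, θ₁ i ^ 2) ≤ B → Real.sqrt (∑ i, θ₂ i ^ 2) ≤ B →
          (θ₁ - θ₂) ⬝ᵥ (V *ᵥ (θ₁ - θ₂)) ≤
            κ ^ 2 * ((g θ₁ - g θ₂) ⬝ᵥ (V⁻¹ *ᵥ (g θ₁ - g θ₂))) := by
  rw [sigmoid_eq_real_sigmoid] at hκ hg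
  replace hV : V = regularizedGram (lam * κ) v := hV
  replace hg : g = regularizedGlmGradient lam Real.sigmoid v := funext hg
  set μ := Real.sigmoid B * (1 - Real.sigmoid B)
  have hμ : 0 < μ := mul_pos (Real.sigmoid_pos B) (sub_pos.2 (Real.sigmoid_lt_one B))
  have hκμ : κ * μ = 1 := by rw [hκ, one_div, inv_mul_cancel₀ hμ.ne']
  have hVpd : V.PosDef := hV ▸ regularizedGram_posDef (by rw [hκ]; positivity) v
  refine ⟨hVpd, fun θ₁ θ₂ hθ₁ hθ₂ => ?_⟩
  have hproj : ∀ θ : Fin n → ℝ, √(∑ i, θ i ^ 2) ≤ B → ∀ τ, |θ ⬝ᵥ v τ| ≤ B := fun θ hθ τ =>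
    (abs_dotProduct_le_sqrt_mul_sqrt θ (v τ)).trans
      ((mul_le_of_le_one_right (Real.sqrt_nonneg _) (hv τ)).trans hθ)
  have hmono : μ * ((θ₁ - θ₂) ⬝ᵥ (V *ᵥ (θ₁ - θ₂))) ≤ (g θ₁ - g θ₂) ⬝ᵥ (θ₁ - θ₂) := by
    rw [hV, hg]
    exact mul_dotProduct_regularizedGram_mulVec_le (by linear_combination lam * hκμ) v
      fun τ => mul_sq_le_sigmoid_sub_mul_sub (hproj θ₁ hθ₁ τ) (hproj θ₂ hθ₂ τ)
  calc (θ₁ - θ₂) ⬝ᵥ (V *ᵥ (θ₁ - θ₂))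
      = κ ^ 2 * (μ ^ 2 * ((θ₁ - θ₂) ⬝ᵥ (V *ᵥ (θ₁ - θ₂)))) := by
        rw [← mul_assoc, ← mul_pow, hκμ, one_pow, one_mul]
    _ ≤ κ ^ 2 * ((g θ₁ - g θ₂) ⬝ᵥ (V⁻¹ *ᵥ (g θ₁ - g θ₂))) :=
        mul_le_mul_of_nonneg_left (hVpd.sq_mul_dotProduct_mulVec_le hμ.le hmono) (sq_nonneg κ)

theorem quadratic_form_bound_via_gradient
    (n t : ℕ) (lam B κ : ℝ) (hlam : 0 < lam) (hB : 0 ≤ B)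
    (hκ : κ = 1 / (sigmoid B * (1 - sigmoid B)))
    (v : Fin t → (Fin n → ℝ))
    (hv : ∀ τ, Real.sqrt (∑ i, v τ i ^ 2) ≤ 1)
    (V : Matrix (Fin n) (Fin n) ℝ)
    (hV : V = (lam * κ) • (1 : Matrix (Fin n) (Fin n) ℝ) +
        ∑ τ, vecMulVec (v τ) (v τ))
    (g : (Fin n → ℝ) → (Fin n → ℝ))
    (hg : ∀ θ, g θ = lam • θ + ∑ τ, sigmoid (θ ⬝ᵥ v τ) • v τ) :
    V.PosDef ∧
      ∀ θ₁ θ₂ : Fin n → ℝ,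
        Real.sqrt (∑ i, θ₁ i ^ 2) ≤ B → Real.sqrt (∑ i, θ₂ i ^ 2) ≤ B →
          (θ₁ - θ₂) ⬝ᵥ (V *ᵥ (θ₁ - θ₂)) ≤
            κ ^ 2 * ((g θ₁ - g θ₂) ⬝ᵥ (V⁻¹ *ᵥ (g θ₁ - g θ₂))) :=
  quadratic_form_bound_via_gradient_general n t lam B κ hlam hκ v hv V hV g hg
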